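/- For any bipartite quantum state ρ on systems E and A₁A₂, the max-mutual information satisfies the non-locking inequality I_max(E;A₁A₂)_ρ ≤ I_max(E;A₁)_ρ + 2·log|A₂|, where |A₂| is the dimension of system A₂. -/

import Mathlib

/-!
For every positive `ρ` on `A₁A₂E`, pinching in a basis `{|m⟩}` of `A₂` gives the operator
inequality `ρ ≤ |A₂| · Σ_m P_m ρ P_m` (from the identity
`Σ_{j,k} (P_j - P_k) ρ (P_j - P_k)† = 2 (|A₂| Σ_m P_m ρ P_m - ρ)`), and each block `P_m ρ P_m`
is dominated by `ρ_{A₁E}` placed in block `m`. Hence `ρ ≤ |A₂| · ρ_{A₁E} ⊗ 1_{A₂}`, so an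
exponent `λ` with `ρ_{A₁E} ≤ 2^λ σ_{A₁} ⊗ ρ_E` yields
`ρ ≤ 2^(λ + 2 log|A₂|) (σ_{A₁} ⊗ 1/|A₂|) ⊗ ρ_E`. Since `sInf ∅ = 0` in Lean, one also uses
that tracing out `A₂` maps exponents admissible for `A₁A₂` to exponents admissible for `A₁`.
-/

open Matrix Kronecker ComplexOrder

noncomputable section

variable {n : Type*} [Fintype n] [DecidableEq n]

/-- The PSD square root of a PSD matrix, as `Matrix.PosSemidef.sqrt` was defined in Mathlib
(December 2024); it has since been removed from Mathlib. -/
def Matrix.PosSemidef.sqrt {𝕜 : Type*} [RCLike 𝕜] {A : Matrix n n 𝕜} (hA : A.PosSemidef) :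
    Matrix n n 𝕜 :=
  hA.1.eigenvectorUnitary.1 * diagonal ((↑) ∘ (√·) ∘ hA.1.eigenvalues) *
  (star hA.1.eigenvectorUnitary : Matrix n n 𝕜)

open Classical in
/-- The square root of a matrix: the PSD square root if the matrix is PSD, else 0. -/
def msqrt (A : Matrix n n ℂ) : Matrix n n ℂ :=
  if h : A.PosSemidef then h.sqrt else 0

/-- The trace norm (Schatten 1-norm) of a matrix. -/
def trNorm (A : Matrix n n ℂ) : ℝ :=
  ((Matrix.posSemidef_conjTranspose_mul_self A).sqrt.trace).re

/-- The operator norm of a matrix, acting on the Euclidean space. -/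
def opNorm (A : Matrix n n ℂ) : ℝ :=
  ‖(Matrix.toEuclideanCLM (𝕜 := ℂ) A : EuclideanSpace ℂ n →L[ℂ] EuclideanSpace ℂ n)‖

/-- A (normalized) quantum state: positive semidefinite with unit trace. -/
def IsState (ρ : Matrix n n ℂ) : Prop := ρ.PosSemidef ∧ ρ.trace = 1

/-- A subnormalized quantum state: positive semidefinite with trace at most one. -/
def IsSubState (ρ : Matrix n n ℂ) : Prop := ρ.PosSemidef ∧ (ρ.trace).re ≤ 1

/-- Loewner (semidefinite) order: `A ≤ B` iff `B - A` is positive semidefinite. -/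
def LoewnerLE (A B : Matrix n n ℂ) : Prop := (B - A).PosSemidef

/-- Fidelity `F(ρ,σ) = ‖√ρ√σ‖₁` (extended to positive operators). -/
def fid (ρ σ : Matrix n n ℂ) : ℝ := trNorm (msqrt ρ * msqrt σ)

/-- Generalized fidelity for subnormalized states. -/
def gFid (ρ σ : Matrix n n ℂ) : ℝ :=
  fid ρ σ + Real.sqrt ((1 - ρ.trace.re) * (1 - σ.trace.re))

/-- (Generalized) purified distance `P(ρ,σ) = sqrt(1 - F(ρ,σ)²)`. -/
def pDist (ρ σ : Matrix n n ℂ) : ℝ := Real.sqrt (1 - (gFid ρ σ)^2)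

/-- Generalized trace distance `δ(ρ,σ) = (‖ρ-σ‖₁ + |Tr(ρ-σ)|)/2` for subnormalized states. -/
def trDist (ρ σ : Matrix n n ℂ) : ℝ :=
  (trNorm (ρ - σ) + |(ρ.trace - σ.trace).re|) / 2

variable {α β γ : Type*} [Fintype α] [DecidableEq α] [Fintype β] [DecidableEq β]
  [Fintype γ] [DecidableEq γ]

/-- Partial trace over the second tensor factor. -/
def ptrSnd (ρ : Matrix (α × β) (α × β) ℂ) : Matrix α α ℂ :=
  fun i j => ∑ k, ρ (i, k) (j, k)

/-- Partial trace over the first tensor factor. -/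
def ptrFst (ρ : Matrix (α × β) (α × β) ℂ) : Matrix β β ℂ :=
  fun i j => ∑ k, ρ (k, i) (k, j)

/-- Partial trace over the middle factor of a tripartite system `(α × β) × γ`. -/
def ptrMid (ρ : Matrix ((α × β) × γ) ((α × β) × γ) ℂ) : Matrix (α × γ) (α × γ) ℂ :=
  fun p q => ∑ m, ρ ((p.1, m), p.2) ((q.1, m), q.2)

/-- Max-relative entropy `D_max(ρ‖σ) = inf {λ : ρ ≤ 2^λ σ}`. -/
def Dmax (ρ σ : Matrix n n ℂ) : ℝ :=
  sInf {l : ℝ | LoewnerLE ρ (((2:ℝ) ^ l) • σ)}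

open Classical in
/-- von Neumann entropy (base 2) of a matrix (0 if not Hermitian). -/
def vnEntropy (ρ : Matrix n n ℂ) : ℝ :=
  if h : ρ.IsHermitian then -∑ i, (h.eigenvalues i) * Real.logb 2 (h.eigenvalues i) else 0

/-- Max-mutual information `I_max(E;A)_ρ` for a state `ρ_{AE}` on `A × E` (A first):
the infimum of λ such that `ρ_{AE} ≤ 2^λ·σ_A ⊗ ρ_E` for some state σ_A. -/
def ImaxEA {α β : Type*} [Fintype α] [DecidableEq α] [Fintype β] [DecidableEq β]
    (ρ : Matrix (α × β) (α × β) ℂ) : ℝ :=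
  sInf {l : ℝ | ∃ σ : Matrix α α ℂ, IsState σ ∧
    LoewnerLE ρ (((2:ℝ) ^ l) • (σ ⊗ₖ ptrFst ρ))}

open scoped MatrixOrder

theorem sum_sum_sub_mul_mul_star_sub {R ι : Type*} [Ring R] [StarRing R] [Fintype ι]
    {P : ι → R} (hP : ∑ i, P i = 1) (x : R) :
    ∑ i, ∑ j, (P i - P j) * x * star (P i - P j)
      = 2 • (Fintype.card ι • ∑ i, P i * x * star (P i) - x) := by
  have hx : ∑ i, ∑ j, P i * x * star (P j) = x := by
    simp only [← Finset.mul_sum, ← star_sum, ← Finset.sum_mul, hP, star_one, mul_one, one_mul]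
  have hx' : ∑ i, ∑ j, P j * x * star (P i) = x := by
    rw [Finset.sum_comm, hx]
  simp only [star_sub, mul_sub, sub_mul, Finset.sum_sub_distrib, Finset.sum_const,
    Finset.card_univ, hx, hx', ← Finset.smul_sum]
  abel

namespace Matrix

variable {m n : Type*}

lemma loewnerLE_iff_le {A B : Matrix n n ℂ} : LoewnerLE A B ↔ A ≤ B := Iff.rfl

lemma mul_mul_conjTranspose_le_mul_mul_conjTranspose [Fintype m] [Fintype n]
    {A B : Matrix n n ℂ} (h : A ≤ B) (V : Matrix m n ℂ) : V * A * Vᴴ ≤ V * B * Vᴴ := by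
  rw [le_iff, ← Matrix.sub_mul, ← Matrix.mul_sub]
  exact (le_iff.mp h).mul_mul_conjTranspose_same V

theorem le_card_smul_sum_mul_mul_conjTranspose [Fintype n] [DecidableEq n] {ι : Type*}
    [Fintype ι] {P : ι → Matrix n n ℂ} (hP : ∑ i, P i = 1) {ρ : Matrix n n ℂ} (hρ : ρ.PosSemidef) :
    ρ ≤ (Fintype.card ι : ℝ) • ∑ i, P i * ρ * (P i)ᴴ := by
  have hsum := sum_sum_sub_mul_mul_star_sub hP ρ
  simp only [star_eq_conjTranspose] at hsum
  have h2 : (2 • (Fintype.card ι • ∑ i, P i * ρ * (P i)ᴴ - ρ)).PosSemidef :=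
    hsum ▸ posSemidef_sum _ fun i _ => posSemidef_sum _ fun j _ =>
      hρ.mul_mul_conjTranspose_same _
  have h1 := h2.smul (show (0 : ℝ) ≤ 2⁻¹ by norm_num)
  rw [le_iff, Nat.cast_smul_eq_nsmul]
  rwa [two_nsmul, ← two_smul ℝ, smul_smul, inv_mul_cancel₀ two_ne_zero, one_smul] at h1

end Matrix

section PartialTrace

variable {α₁ α₂ β : Type*}

def midInsert (m : α₂) (q : α₁ × β) : (α₁ × α₂) × β := ((q.1, m), q.2)

lemma eq_midInsert_iff {m : α₂} {p : (α₁ × α₂) × β} {q : α₁ × β} :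
    p = midInsert m q ↔ p.1.2 = m ∧ q = (p.1.1, p.2) := by
  obtain ⟨⟨a, j⟩, e⟩ := p
  simp only [midInsert, Prod.ext_iff]
  tauto

variable [Fintype α₂]

lemma ptrMid_eq_sum_submatrix (ρ : Matrix ((α₁ × α₂) × β) ((α₁ × α₂) × β) ℂ) :
    ptrMid ρ = ∑ m, ρ.submatrix (midInsert m) (midInsert m) := by
  ext p q
  simp [ptrMid, Matrix.sum_apply, midInsert]

lemma submatrix_midInsert_le_ptrMid {ρ : Matrix ((α₁ × α₂) × β) ((α₁ × α₂) × β) ℂ}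
    (hρ : ρ.PosSemidef) (m : α₂) : ρ.submatrix (midInsert m) (midInsert m) ≤ ptrMid ρ := by
  rw [ptrMid_eq_sum_submatrix]
  exact Finset.single_le_sum (fun k _ => (hρ.submatrix _).nonneg) (Finset.mem_univ m)

lemma ptrMid_mono {X Y : Matrix ((α₁ × α₂) × β) ((α₁ × α₂) × β) ℂ} (h : X ≤ Y) :
    ptrMid X ≤ ptrMid Y := by
  rw [le_iff, ptrMid_eq_sum_submatrix, ptrMid_eq_sum_submatrix, ← Finset.sum_sub_distrib]
  exact posSemidef_sum _ fun m _ => (le_iff.mp h).submatrix (midInsert m)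

lemma ptrMid_smul (c : ℝ) (X : Matrix ((α₁ × α₂) × β) ((α₁ × α₂) × β) ℂ) :
    ptrMid (c • X) = c • ptrMid X := by
  ext p q
  simp [ptrMid, Finset.smul_sum]

lemma ptrMid_kronecker (σ : Matrix (α₁ × α₂) (α₁ × α₂) ℂ) (E : Matrix β β ℂ) :
    ptrMid (σ ⊗ₖ E) = ptrSnd σ ⊗ₖ E := by
  ext p q
  simp [ptrMid, ptrSnd, kroneckerMap_apply, Finset.sum_mul]

lemma ptrFst_ptrMid [Fintype α₁] (ρ : Matrix ((α₁ × α₂) × β) ((α₁ × α₂) × β) ℂ) :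
    ptrFst (ptrMid ρ) = ptrFst ρ := by
  ext e f
  simp [ptrFst, ptrMid, Fintype.sum_prod_type]

end PartialTrace

section PartialTraceSnd

variable {α β : Type*} [Fintype β]

lemma ptrSnd_posSemidef {σ : Matrix (α × β) (α × β) ℂ} (hσ : σ.PosSemidef) :
    (ptrSnd σ).PosSemidef := by
  have hsum : ptrSnd σ = ∑ k, σ.submatrix (·, k) (·, k) := by
    ext i j
    simp [ptrSnd, Matrix.sum_apply]
  exact hsum ▸ posSemidef_sum _ fun k _ => hσ.submatrix _

lemma trace_ptrSnd [Fintype α] (σ : Matrix (α × β) (α × β) ℂ) : (ptrSnd σ).trace = σ.trace := by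
  simp only [trace, diag, ptrSnd, Fintype.sum_prod_type]

lemma trace_ptrFst [Fintype α] (ρ : Matrix (α × β) (α × β) ℂ) : (ptrFst ρ).trace = ρ.trace := by
  simp only [trace, diag, ptrFst, Fintype.sum_prod_type]
  exact Finset.sum_comm

lemma IsState.ptrSnd [Fintype α] {σ : Matrix (α × β) (α × β) ℂ} (hσ : IsState σ) :
    IsState (ptrSnd σ) :=
  ⟨ptrSnd_posSemidef hσ.1, (trace_ptrSnd σ).trans hσ.2⟩

end PartialTraceSnd

section MidSlice

variable {α₁ α₂ β : Type*} [DecidableEq α₁] [DecidableEq α₂] [DecidableEq β]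

-- The isometry `v ↦ v ⊗ |m⟩` from `A₁E` onto the `m`-th slice of `A₁A₂E`.
variable (α₁ β) in
def midIncl (m : α₂) : Matrix ((α₁ × α₂) × β) (α₁ × β) ℂ :=
  (1 : Matrix ((α₁ × α₂) × β) ((α₁ × α₂) × β) ℂ).submatrix id (midInsert m)

variable [Fintype α₁] [Fintype β]

lemma midIncl_mul_apply {X : Type*} (m : α₂) (M : Matrix (α₁ × β) X ℂ) (p : (α₁ × α₂) × β)
    (x : X) : (midIncl α₁ β m * M) p x = if p.1.2 = m then M (p.1.1, p.2) x else 0 := by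
  simp [midIncl, mul_apply, one_apply, eq_midInsert_iff, ite_and, Finset.sum_ite_eq']

lemma mul_conjTranspose_midIncl_apply {X : Type*} (m : α₂) (M : Matrix X (α₁ × β) ℂ) (x : X)
    (q : (α₁ × α₂) × β) :
    (M * (midIncl α₁ β m)ᴴ) x q = if q.1.2 = m then M x (q.1.1, q.2) else 0 := by
  simp [midIncl, mul_apply, one_apply, @eq_comm _ (midInsert _ _), eq_midInsert_iff, ite_and,
    Finset.sum_ite_eq']

variable [Fintype α₂]

lemma conjTranspose_midIncl_mul_mul_midIncl (m : α₂)
    (ρ : Matrix ((α₁ × α₂) × β) ((α₁ × α₂) × β) ℂ) :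
    (midIncl α₁ β m)ᴴ * ρ * midIncl α₁ β m = ρ.submatrix (midInsert m) (midInsert m) := by
  rw [midIncl, conjTranspose_submatrix, conjTranspose_one, ← Equiv.coe_refl,
    one_submatrix_mul, mul_submatrix_one]
  rfl

lemma sum_midIncl_mul_mul_conjTranspose_apply (M : Matrix (α₁ × β) (α₁ × β) ℂ)
    (p q : (α₁ × α₂) × β) :
    (∑ m, midIncl α₁ β m * M * (midIncl α₁ β m)ᴴ) p q
      = if p.1.2 = q.1.2 then M (p.1.1, p.2) (q.1.1, q.2) else 0 := by
  simp [Matrix.sum_apply, Matrix.mul_assoc, midIncl_mul_apply, mul_conjTranspose_midIncl_apply,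
    @eq_comm _ q.1.2]

lemma sum_midIncl_mul_conjTranspose :
    ∑ m : α₂, midIncl α₁ β m * (midIncl α₁ β m)ᴴ = 1 := by
  ext ⟨⟨a, j⟩, e⟩ ⟨⟨b, k⟩, f⟩
  have h := sum_midIncl_mul_mul_conjTranspose_apply (α₂ := α₂) 1 ((a, j), e) ((b, k), f)
  simp only [Matrix.mul_one] at h
  rw [h]
  by_cases hjk : j = k <;> simp [one_apply, hjk]

lemma sum_midIncl_mul_kronecker_mul_conjTranspose (σ : Matrix α₁ α₁ ℂ) (E : Matrix β β ℂ) :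
    ∑ m, midIncl α₁ β m * (σ ⊗ₖ E) * (midIncl α₁ β m)ᴴ
      = (σ ⊗ₖ (1 : Matrix α₂ α₂ ℂ)) ⊗ₖ E := by
  ext ⟨⟨a, j⟩, e⟩ ⟨⟨b, k⟩, f⟩
  rw [sum_midIncl_mul_mul_conjTranspose_apply]
  by_cases hjk : j = k <;> simp [hjk]

theorem le_card_smul_sum_midIncl_mul_ptrMid_mul_conjTranspose
    {ρ : Matrix ((α₁ × α₂) × β) ((α₁ × α₂) × β) ℂ} (hρ : ρ.PosSemidef) :
    ρ ≤ (Fintype.card α₂ : ℝ) • ∑ m, midIncl α₁ β m * ptrMid ρ * (midIncl α₁ β m)ᴴ := by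
  set V := midIncl α₁ β (α₂ := α₂)
  calc ρ ≤ (Fintype.card α₂ : ℝ) • ∑ m, (V m * (V m)ᴴ) * ρ * (V m * (V m)ᴴ)ᴴ :=
        le_card_smul_sum_mul_mul_conjTranspose sum_midIncl_mul_conjTranspose hρ
    _ ≤ (Fintype.card α₂ : ℝ) • ∑ m, V m * ptrMid ρ * (V m)ᴴ := by
        refine smul_le_smul_of_nonneg_left (Finset.sum_le_sum fun m _ => ?_) (Nat.cast_nonneg _)
        have hconj : (V m * (V m)ᴴ) * ρ * (V m * (V m)ᴴ)ᴴ
            = V m * ((V m)ᴴ * ρ * V m) * (V m)ᴴ := by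
          simp only [conjTranspose_mul, conjTranspose_conjTranspose, Matrix.mul_assoc]
        rw [hconj, conjTranspose_midIncl_mul_mul_midIncl]
        exact mul_mul_conjTranspose_le_mul_mul_conjTranspose
          (submatrix_midInsert_le_ptrMid hρ m) _

end MidSlice

lemma Real.sInf_le_sInf_add {S T : Set ℝ} {c : ℝ} (hS : BddBelow S) (hc : 0 ≤ c)
    (hST : S.Nonempty → T.Nonempty) (hTS : ∀ l ∈ T, l + c ∈ S) : sInf S ≤ sInf T + c := by
  rcases T.eq_empty_or_nonempty with rfl | hT
  · rw [Set.not_nonempty_iff_eq_empty.mp fun h => (hST h).ne_empty rfl, Real.sInf_empty]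
    linarith
  · rw [← sub_le_iff_le_add]
    exact le_csInf hT fun l hl => sub_le_iff_le_add.mpr (csInf_le hS (hTS l hl))

section MaxMutualInformation

def imaxExponents {α β : Type*} [Fintype α] [DecidableEq α] [Fintype β] [DecidableEq β]
    (ρ : Matrix (α × β) (α × β) ℂ) : Set ℝ :=
  {l | ∃ σ : Matrix α α ℂ, IsState σ ∧ LoewnerLE ρ (((2:ℝ) ^ l) • (σ ⊗ₖ ptrFst ρ))}

lemma ImaxEA_eq_sInf_imaxExponents {α β : Type*} [Fintype α] [DecidableEq α] [Fintype β]
    [DecidableEq β] (ρ : Matrix (α × β) (α × β) ℂ) : ImaxEA ρ = sInf (imaxExponents ρ) :=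
  rfl

lemma IsState.nonempty {n : Type*} [Fintype n] {ρ : Matrix n n ℂ} (hρ : IsState ρ) :
    Nonempty n := by
  by_contra h
  have := not_nonempty_iff.mp h
  simpa [trace_eq_zero_of_isEmpty] using hρ.2

lemma LoewnerLE.re_trace_le {n : Type*} [Fintype n] {A B : Matrix n n ℂ} (h : LoewnerLE A B) :
    A.trace.re ≤ B.trace.re := by
  have := Complex.re_le_re h.trace_nonneg
  simpa [trace_sub] using this

lemma nonneg_of_mem_imaxExponents {α β : Type*} [Fintype α] [DecidableEq α] [Fintype β]
    [DecidableEq β] {ρ : Matrix (α × β) (α × β) ℂ} (hρ : IsState ρ) {l : ℝ}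
    (hl : l ∈ imaxExponents ρ) : 0 ≤ l := by
  obtain ⟨σ, hσ, h⟩ := hl
  have htr := h.re_trace_le
  rw [trace_smul, trace_kronecker, hσ.2, trace_ptrFst, hρ.2] at htr
  have : (2:ℝ) ^ (0:ℝ) ≤ 2 ^ l := by simpa using htr
  exact (Real.rpow_le_rpow_left_iff one_lt_two).mp this

variable {α₁ α₂ β : Type*} [Fintype α₁] [DecidableEq α₁] [Fintype α₂] [DecidableEq α₂]
  [Fintype β] [DecidableEq β] {ρ : Matrix ((α₁ × α₂) × β) ((α₁ × α₂) × β) ℂ} {l : ℝ}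

lemma mem_imaxExponents_ptrMid (hl : l ∈ imaxExponents ρ) : l ∈ imaxExponents (ptrMid ρ) := by
  obtain ⟨σ, hσ, h⟩ := hl
  refine ⟨ptrSnd σ, hσ.ptrSnd, ?_⟩
  have := ptrMid_mono (loewnerLE_iff_le.mp h)
  rwa [ptrMid_smul, ptrMid_kronecker, ← ptrFst_ptrMid] at this

lemma add_two_logb_card_mem_imaxExponents [Nonempty α₂] (hρ : ρ.PosSemidef)
    (hl : l ∈ imaxExponents (ptrMid ρ)) :
    l + 2 * Real.logb 2 (Fintype.card α₂) ∈ imaxExponents ρ := by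
  obtain ⟨σ, hσ, h⟩ := hl
  rw [ptrFst_ptrMid] at h
  set d : ℝ := (Fintype.card α₂ : ℝ)
  have hd : 0 < d := Nat.cast_pos.mpr Fintype.card_pos
  refine ⟨σ ⊗ₖ (d⁻¹ • 1), ⟨hσ.1.kronecker (PosSemidef.one.smul (inv_nonneg.mpr hd.le)), ?_⟩, ?_⟩
  · rw [trace_kronecker, hσ.2, trace_smul, trace_one, one_mul, Complex.real_smul]
    push_cast
    exact inv_mul_cancel₀ (by exact_mod_cast hd.ne')
  · have hscale : (2:ℝ) ^ (l + 2 * Real.logb 2 d) = d * 2 ^ l * d := by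
      rw [Real.rpow_add two_pos, mul_comm 2, Real.rpow_mul zero_le_two,
        Real.rpow_logb two_pos one_lt_two.ne' hd, Real.rpow_two]
      ring
    rw [loewnerLE_iff_le]
    calc ρ ≤ d • ∑ m, midIncl α₁ β m * ptrMid ρ * (midIncl α₁ β m)ᴴ :=
          le_card_smul_sum_midIncl_mul_ptrMid_mul_conjTranspose hρ
      _ ≤ d • ∑ m, midIncl α₁ β m * ((2:ℝ) ^ l • (σ ⊗ₖ ptrFst ρ)) * (midIncl α₁ β m)ᴴ :=
          smul_le_smul_of_nonneg_left (Finset.sum_le_sum fun m _ =>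
            mul_mul_conjTranspose_le_mul_mul_conjTranspose h _) hd.le
      _ = _ := by
          simp only [Matrix.mul_smul, Matrix.smul_mul, ← Finset.smul_sum,
            sum_midIncl_mul_kronecker_mul_conjTranspose, smul_kronecker, kronecker_smul, smul_smul,
            hscale]
          congr 1
          field_simp

end MaxMutualInformation

/-- Non-locking property of the max-mutual information:
`I_max(E;A₁A₂)_ρ ≤ I_max(E;A₁)_ρ + 2·log|A₂|`. Here the state lives on `(A₁ × A₂) × E`. -/
theorem ImaxEA_le_ImaxEA_ptrMid_add_two_log_card {α₁ α₂ β : Type*}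
    [Fintype α₁] [DecidableEq α₁] [Fintype α₂] [DecidableEq α₂]
    [Fintype β] [DecidableEq β]
    (ρ : Matrix ((α₁ × α₂) × β) ((α₁ × α₂) × β) ℂ) (hρ : IsState ρ) :
    ImaxEA ρ ≤ ImaxEA (ptrMid ρ) + 2 * Real.logb 2 (Fintype.card α₂) := by
  have : Nonempty α₂ := hρ.nonempty.map (·.1.2)
  have hlog : 0 ≤ 2 * Real.logb 2 (Fintype.card α₂) :=
    mul_nonneg zero_le_two (Real.logb_nonneg one_lt_two (Nat.one_le_cast.mpr Fintype.card_pos))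
  rw [ImaxEA_eq_sInf_imaxExponents, ImaxEA_eq_sInf_imaxExponents]
  exact Real.sInf_le_sInf_add ⟨0, fun l => nonneg_of_mem_imaxExponents hρ⟩ hlog
    (fun ⟨l, hl⟩ => ⟨l, mem_imaxExponents_ptrMid hl⟩)
    fun l => add_two_logb_card_mem_imaxExponents hρ.1
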